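/- Let G be a closed, convex germ containing the principal stem 𝒮 = cc(Δ_e ∪ B_i). If G is not itself a qplex, then the collection of qplexes containing G is uncountable. -/

import Mathlib

noncomputable section

/- Ambient space: ℝ^(d²) with the standard inner product. -/
abbrev V (d : ℕ) := EuclideanSpace ℝ (Fin (d^2))

/-- The standard inner product ⟨u, v⟩ = ∑ i, u i * v i. -/
def ip {d : ℕ} (u v : V d) : ℝ := inner ℝ u v

/-- The barycenter c, with all entries equal to 1/d². -/
def cpt (d : ℕ) : V d := WithLp.toLp 2 (fun _ => 1/(d^2:ℝ))

/-- The hyperplane H = {u : ⟨u, c⟩ = 1/d²} of vectors whose entries sum to 1. -/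
def Hs (d : ℕ) : Set (V d) := {u | ip u (cpt d) = 1/(d^2:ℝ)}

/-- The polar A* = {u ∈ H : ⟨u, v⟩ ≥ 1/(d(d+1)) for all v ∈ A}. -/
def polar (d : ℕ) (A : Set (V d)) : Set (V d) :=
  {u | u ∈ Hs d ∧ ∀ v ∈ A, 1/((d:ℝ)*((d:ℝ)+1)) ≤ ip u v}

/-- cc(A): the closed convex hull of A. -/
def cc (d : ℕ) (A : Set (V d)) : Set (V d) := closure (convexHull ℝ A)

/-- The probability simplex Δ = {u ∈ H : u i ≥ 0 for all i}. -/
def probSimplex (d : ℕ) : Set (V d) := {u | u ∈ Hs d ∧ ∀ i, 0 ≤ u i}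

/-- The basis distributions e_k, with e_k(i) = (δ_{ki} + 1/d)/(d+1). -/
def basisDist (d : ℕ) (k : Fin (d^2)) : V d :=
  WithLp.toLp 2 (fun i => ((if k = i then (1:ℝ) else 0) + 1/(d:ℝ)) / ((d:ℝ)+1))

/-- The basis simplex Δ_e: the convex hull of the basis distributions. -/
def basisSimplex (d : ℕ) : Set (V d) := convexHull ℝ (Set.range (basisDist d))

/-- The out-ball B_o = {u ∈ H : ⟨u, u⟩ ≤ 2/(d(d+1))}. -/
def outBall (d : ℕ) : Set (V d) := {u | u ∈ Hs d ∧ ip u u ≤ 2/((d:ℝ)*((d:ℝ)+1))}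

/-- The out-sphere S_o = {u ∈ H : ⟨u, u⟩ = 2/(d(d+1))}. -/
def outSphere (d : ℕ) : Set (V d) := {u | u ∈ Hs d ∧ ip u u = 2/((d:ℝ)*((d:ℝ)+1))}

/-- The in-ball B_i = {u ∈ H : ‖u − c‖² ≤ 1/(d²(d²−1))}. -/
def inBall (d : ℕ) : Set (V d) :=
  {u | u ∈ Hs d ∧ ‖u - cpt d‖^2 ≤ 1/((d:ℝ)^2*((d:ℝ)^2-1))}

/-- The in-sphere S_i = {u ∈ H : ‖u − c‖² = 1/(d²(d²−1))}. -/
def inSphere (d : ℕ) : Set (V d) :=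
  {u | u ∈ Hs d ∧ ‖u - cpt d‖^2 = 1/((d:ℝ)^2*((d:ℝ)^2-1))}

/-- The mid-ball B_m = {u ∈ H : ‖u − c‖² ≤ 1/(d²(d+1))}. -/
def midBall (d : ℕ) : Set (V d) :=
  {u | u ∈ Hs d ∧ ‖u - cpt d‖^2 ≤ 1/((d:ℝ)^2*((d:ℝ)+1))}

/-- A germ: a subset of Δ whose pairwise inner products satisfy the
fundamental inequalities 1/(d(d+1)) ≤ ⟨p, s⟩ ≤ 2/(d(d+1)). -/
def IsGerm (d : ℕ) (G : Set (V d)) : Prop :=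
  G ⊆ probSimplex d ∧
  ∀ p ∈ G, ∀ s ∈ G, 1/((d:ℝ)*((d:ℝ)+1)) ≤ ip p s ∧ ip p s ≤ 2/((d:ℝ)*((d:ℝ)+1))

/-- A qplex: a self-polar subset of Δ ∩ B_o. -/
def IsQplex (d : ℕ) (Q : Set (V d)) : Prop :=
  Q ⊆ probSimplex d ∩ outBall d ∧ Q = polar d Q

/-- Action of a d²×d² matrix on a vector: (R u)(i) = ∑ j, R i j * u j. -/
def mvec (d : ℕ) (R : Matrix (Fin (d^2)) (Fin (d^2)) ℝ) (u : V d) : V d :=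
  WithLp.toLp 2 (fun i => ∑ j, R i j * u j)

/-!
As a germ, `G ⊆ G*`, and `G ≠ G*` since `G` is not a qplex; pick `q ∈ G* \ G`. Separating `q`
from the closed convex set `G` gives a direction `A ⊥ c` with `⟨A, g⟩ < 1` on `G` and
`h := ⟨A, q⟩ > 1`. For `τ ∈ (1, h]` the points `p τ = c - (γ / τ) A` and
`r τ = c + (τ / h) (q - c)`, where `γ = 1 / (d² (d + 1))`, lie in `G*` and satisfy
`⟨p τ, r σ⟩ = 1 / d² - γ σ / τ`, which is at least `1 / (d (d + 1))` exactly when `σ ≤ τ`.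
So `G ∪ {p τ, r τ}` is a germ; by Zorn it lies in a maximal germ `Q τ`, which is a qplex because
the polar of the stem lies in `Δ ∩ B_o`. Finally `Q τ ≠ Q σ` for `τ < σ`, since no germ contains
both `p τ` and `r σ`.
-/

open scoped InnerProductSpace

section InnerProductSpace

variable {E : Type*} [NormedAddCommGroup E] [InnerProductSpace ℝ E]

lemma real_inner_le_of_inner_self_le {u v : E} {a : ℝ} (hu : ⟪u, u⟫_ℝ ≤ a)
    (hv : ⟪v, v⟫_ℝ ≤ a) : ⟪u, v⟫_ℝ ≤ a := by
  rw [real_inner_self_eq_norm_sq] at hu hv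
  nlinarith [real_inner_le_norm u v, two_mul_le_add_sq ‖u‖ ‖v‖]

lemma exists_inner_sub_lt_one_lt_inner_sub [CompleteSpace E] {G : Set E} (hconv : Convex ℝ G)
    (hclosed : IsClosed G) {c q : E} (hc : c ∈ G) (hq : q ∉ G) :
    ∃ a : E, (∀ g ∈ G, ⟪a, g - c⟫_ℝ < 1) ∧ 1 < ⟪a, q - c⟫_ℝ := by
  obtain ⟨f, w, hfG, hfq⟩ := geometric_hahn_banach_closed_point hconv hclosed hq
  have hw : 0 < w - f c := sub_pos.2 (hfG c hc)
  have key : ∀ x, ⟪(InnerProductSpace.toDual ℝ E).symm ((w - f c)⁻¹ • f), x - c⟫_ℝ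
      = (f x - f c) / (w - f c) := by
    intro x
    rw [InnerProductSpace.toDual_symm_apply]
    simp [div_eq_inv_mul]
  refine ⟨(InnerProductSpace.toDual ℝ E).symm ((w - f c)⁻¹ • f), fun g hg => ?_, ?_⟩ <;> rw [key]
  · exact (div_lt_one hw).2 (by linarith [hfG g hg])
  · exact (one_lt_div hw).2 (by linarith)

end InnerProductSpace

section Qplex

variable {d : ℕ}

lemma ip_comm (u v : V d) : ip u v = ip v u := real_inner_comm v u

lemma inner_cpt_right (u : V d) : ⟪u, cpt d⟫_ℝ = (∑ i, u i) / (d:ℝ) ^ 2 := by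
  simp [cpt, PiLp.inner_apply, Finset.sum_mul, div_eq_mul_inv, mul_comm]

lemma inner_cpt_cpt (d : ℕ) : ⟪cpt d, cpt d⟫_ℝ = 1 / (d:ℝ) ^ 2 := by
  rcases eq_or_ne d 0 with rfl | hd
  · rw [inner_cpt_right]; simp
  · rw [inner_cpt_right]
    simp only [cpt, one_div, Finset.sum_const, Finset.card_univ, Fintype.card_fin, nsmul_eq_mul,
      Nat.cast_pow]
    field_simp

lemma sum_eq_one_of_mem_Hs (hd : d ≠ 0) {u : V d} (hu : u ∈ Hs d) : ∑ i, u i = 1 := by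
  have : (∑ i, u i) / (d:ℝ) ^ 2 = 1 / (d:ℝ) ^ 2 := (inner_cpt_right u).symm.trans hu
  rwa [div_left_inj' (by positivity)] at this

lemma mem_Hs_iff_inner_sub_cpt {u : V d} : u ∈ Hs d ↔ ⟪u - cpt d, cpt d⟫_ℝ = 0 := by
  rw [inner_sub_left, inner_cpt_cpt, sub_eq_zero]
  rfl

lemma ip_eq_add_inner_sub_cpt {u v : V d} (hu : u ∈ Hs d) (hv : v ∈ Hs d) :
    ip u v = 1 / (d:ℝ) ^ 2 + ⟪u - cpt d, v - cpt d⟫_ℝ := by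
  rw [mem_Hs_iff_inner_sub_cpt] at hu hv
  have := inner_cpt_cpt d
  rw [real_inner_comm] at hv
  simp only [ip, inner_sub_left, inner_sub_right] at *
  linarith

lemma one_div_sq_le_ip_self {u : V d} (hu : u ∈ Hs d) : 1 / (d:ℝ) ^ 2 ≤ ip u u := by
  rw [ip_eq_add_inner_sub_cpt hu hu]
  linarith [real_inner_self_nonneg (x := u - cpt d)]

lemma one_div_mul_succ_eq (hd : d ≠ 0) :
    1 / ((d:ℝ) * ((d:ℝ) + 1)) = 1 / (d:ℝ) ^ 2 - 1 / ((d:ℝ) ^ 2 * ((d:ℝ) + 1)) := by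
  field_simp
  ring

lemma one_div_mul_succ_le_ip_self (hd : d ≠ 0) {u : V d} (hu : u ∈ Hs d) :
    1 / ((d:ℝ) * ((d:ℝ) + 1)) ≤ ip u u := by
  rw [one_div_mul_succ_eq hd]
  have : 0 < 1 / ((d:ℝ) ^ 2 * ((d:ℝ) + 1)) := by positivity
  linarith [one_div_sq_le_ip_self hu]

lemma polar_anti {A B : Set (V d)} (h : A ⊆ B) : polar d B ⊆ polar d A :=
  fun _ hu => ⟨hu.1, fun v hv => hu.2 v (h hv)⟩

lemma convex_polar (A : Set (V d)) : Convex ℝ (polar d A) := by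
  intro x hx y hy a b ha hb hab
  simp only [polar, Hs, ip, Set.mem_ofPred_eq, inner_add_left, real_inner_smul_left] at hx hy ⊢
  refine ⟨by rw [hx.1, hy.1, ← add_mul, hab, one_mul], fun v hv => ?_⟩
  set ℓ : ℝ := 1 / ((d:ℝ) * ((d:ℝ) + 1))
  calc ℓ = a * ℓ + b * ℓ := by rw [← add_mul, hab, one_mul]
    _ ≤ _ := add_le_add (mul_le_mul_of_nonneg_left (hx.2 v hv) ha)
        (mul_le_mul_of_nonneg_left (hy.2 v hv) hb)

lemma cpt_mem_polar (hd : d ≠ 0) {A : Set (V d)} (hA : A ⊆ Hs d) : cpt d ∈ polar d A := by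
  refine ⟨inner_cpt_cpt d, fun v hv => ?_⟩
  rw [ip_comm, hA hv, one_div_mul_succ_eq hd]
  have : 0 < 1 / ((d:ℝ) ^ 2 * ((d:ℝ) + 1)) := by positivity
  linarith

lemma ip_basisDist (hd : d ≠ 0) {u : V d} (hu : u ∈ Hs d) (k : Fin (d ^ 2)) :
    ip u (basisDist d k) = (u k + 1 / (d:ℝ)) / ((d:ℝ) + 1) := by
  simp only [ip, basisDist, PiLp.inner_apply, RCLike.inner_apply, conj_trivial, add_div,
    add_mul, Finset.sum_add_distrib, ite_div, zero_div, ite_mul, zero_mul, Finset.sum_ite_eq,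
    Finset.mem_univ, if_true]
  rw [← Finset.mul_sum, sum_eq_one_of_mem_Hs hd hu]
  ring

lemma polar_range_basisDist_subset (hd : d ≠ 0) :
    polar d (Set.range (basisDist d)) ⊆ probSimplex d := by
  refine fun u ⟨hu, hpol⟩ => ⟨hu, fun k => ?_⟩
  have h := hpol _ ⟨k, rfl⟩
  rw [ip_basisDist hd hu, le_div_iff₀ (by positivity)] at h
  have : 1 / ((d:ℝ) * ((d:ℝ) + 1)) * ((d:ℝ) + 1) = 1 / (d:ℝ) := by field_simp
  linarith

lemma inBall_sq_radius_pos (hd : 1 < d) : 0 < 1 / ((d:ℝ) ^ 2 * ((d:ℝ) ^ 2 - 1)) := by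
  have : (1:ℝ) < (d:ℝ) ^ 2 := by exact_mod_cast Nat.one_lt_pow two_ne_zero hd
  exact one_div_pos.2 (mul_pos (by linarith) (by linarith))

lemma cpt_mem_inBall (hd : 1 < d) : cpt d ∈ inBall d := by
  refine ⟨inner_cpt_cpt d, ?_⟩
  rw [sub_self, norm_zero, zero_pow two_ne_zero]
  exact (inBall_sq_radius_pos hd).le

-- The witness is the point of the in-sphere on the far side of `cpt d` from `u`.
lemma exists_mem_inBall_ip_eq (hd : 1 < d) {u : V d} (hu : u ∈ Hs d) :
    ∃ v ∈ inBall d,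
      ip u v = 1 / (d:ℝ) ^ 2 - √(1 / ((d:ℝ) ^ 2 * ((d:ℝ) ^ 2 - 1))) * ‖u - cpt d‖ := by
  set x := u - cpt d
  set n := ‖x‖
  set R : ℝ := 1 / ((d:ℝ) ^ 2 * ((d:ℝ) ^ 2 - 1))
  have hR : 0 < R := inBall_sq_radius_pos hd
  set t := -(√R / n)
  have hv : cpt d + t • x ∈ inBall d := by
    refine ⟨mem_Hs_iff_inner_sub_cpt.2 ?_, ?_⟩
    · rw [add_sub_cancel_left, real_inner_smul_left, mem_Hs_iff_inner_sub_cpt.1 hu, mul_zero]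
    · rw [add_sub_cancel_left, norm_smul, mul_pow, Real.norm_eq_abs, sq_abs, neg_sq, div_pow,
        Real.sq_sqrt hR.le]
      rcases eq_or_ne n 0 with hn | hn
      · simp only [show ‖x‖ = 0 from hn, ne_eq, OfNat.ofNat_ne_zero, not_false_eq_true,
          zero_pow, mul_zero]
        exact hR.le
      · rw [div_mul_cancel₀ _ (pow_ne_zero 2 hn)]
  have htn : t * n ^ 2 = -(√R * n) := by
    rcases eq_or_ne n 0 with hn | hn
    · simp [hn]
    · simp only [t]
      field_simp
  refine ⟨_, hv, ?_⟩
  rw [ip_eq_add_inner_sub_cpt hu hv.1, add_sub_cancel_left, real_inner_smul_right,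
    real_inner_self_eq_norm_sq, htn, sub_eq_add_neg]

lemma polar_inBall_subset (hd : 1 < d) : polar d (inBall d) ⊆ outBall d := by
  rintro u ⟨hu, hpol⟩
  refine ⟨hu, ?_⟩
  set n := ‖u - cpt d‖
  set R : ℝ := 1 / ((d:ℝ) ^ 2 * ((d:ℝ) ^ 2 - 1))
  set γ : ℝ := 1 / ((d:ℝ) ^ 2 * ((d:ℝ) + 1))
  have hR : 0 < R := inBall_sq_radius_pos hd
  obtain ⟨v, hv, hip⟩ := exists_mem_inBall_ip_eq hd hu
  have hγ : √R * n ≤ γ := by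
    have := hpol v hv
    rw [hip, one_div_mul_succ_eq (by omega)] at this
    linarith
  have hn2 : R * n ^ 2 ≤ γ ^ 2 := by
    rw [← Real.sq_sqrt hR.le, ← mul_pow]
    exact pow_le_pow_left₀ (by positivity) hγ 2
  have hγR : γ ^ 2 / R = 2 / ((d:ℝ) * ((d:ℝ) + 1)) - 1 / (d:ℝ) ^ 2 := by
    have : (1:ℝ) < d := by exact_mod_cast hd
    simp only [γ, R]
    field_simp
    ring
  rw [ip_eq_add_inner_sub_cpt hu hu, real_inner_self_eq_norm_sq]
  linarith [(le_div_iff₀' hR).2 hn2]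

lemma polar_subset_probSimplex_inter_outBall (hd : 1 < d) {S : Set (V d)}
    (hS : Set.range (basisDist d) ∪ inBall d ⊆ S) : polar d S ⊆ probSimplex d ∩ outBall d :=
  fun _ hu =>
    ⟨polar_range_basisDist_subset (by omega) (polar_anti (Set.subset_union_left.trans hS) hu),
      polar_inBall_subset hd (polar_anti (Set.subset_union_right.trans hS) hu)⟩

lemma IsGerm.subset_polar {G : Set (V d)} (hG : IsGerm d G) : G ⊆ polar d G :=
  fun p hp => ⟨(hG.1 hp).1, fun s hs => (hG.2 p hp s hs).1⟩

lemma IsGerm.insert (hd : d ≠ 0) {S : Set (V d)} (hS : IsGerm d S) {u : V d}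
    (hu : u ∈ probSimplex d ∩ outBall d)
    (hlow : ∀ p ∈ S, 1 / ((d:ℝ) * ((d:ℝ) + 1)) ≤ ip u p) : IsGerm d (insert u S) := by
  refine ⟨Set.insert_subset hu.1 hS.1, ?_⟩
  rintro p (rfl | hp) s (rfl | hs)
  · exact ⟨one_div_mul_succ_le_ip_self hd hu.1.1, hu.2.2⟩
  · exact ⟨hlow s hs, real_inner_le_of_inner_self_le hu.2.2 (hS.2 s hs s hs).2⟩
  · exact ⟨ip_comm s p ▸ hlow p hp, real_inner_le_of_inner_self_le (hS.2 p hp p hp).2 hu.2.2⟩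
  · exact hS.2 p hp s hs

lemma IsGerm.exists_maximal {S : Set (V d)} (hS : IsGerm d S) :
    ∃ M, S ⊆ M ∧ Maximal (IsGerm d) M := by
  refine zorn_subset_nonempty {T | IsGerm d T} (fun c hc hchain _ => ?_) S hS
  refine ⟨⋃₀ c, ⟨?_, ?_⟩, fun s hs => Set.subset_sUnion_of_mem hs⟩
  · rintro x ⟨t, htc, hxt⟩
    exact (hc htc).1 hxt
  · rintro p ⟨t₁, ht₁, hp⟩ s ⟨t₂, ht₂, hs⟩
    rcases hchain.total ht₁ ht₂ with h | h
    · exact (hc ht₂).2 p (h hp) s hs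
    · exact (hc ht₁).2 p hp s (h hs)

lemma IsGerm.isQplex_of_polar_subset {G : Set (V d)} (hG : IsGerm d G) (h : polar d G ⊆ G) :
    IsQplex d G :=
  ⟨fun p hp => ⟨hG.1 hp, (hG.1 hp).1, (hG.2 p hp p hp).2⟩, hG.subset_polar.antisymm h⟩

lemma Maximal.isQplex (hd : 1 < d) {M : Set (V d)} (hM : Maximal (IsGerm d) M)
    (hS : Set.range (basisDist d) ∪ inBall d ⊆ M) : IsQplex d M :=
  hM.prop.isQplex_of_polar_subset fun u hu =>
    hM.mem_of_prop_insert (hM.prop.insert (by omega)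
      (polar_subset_probSimplex_inter_outBall hd hS hu) hu.2)

lemma IsGerm.exists_isQplex_superset (hd : 1 < d) {S : Set (V d)} (hS : IsGerm d S)
    (hstem : Set.range (basisDist d) ∪ inBall d ⊆ S) : ∃ Q, IsQplex d Q ∧ S ⊆ Q :=
  let ⟨M, hSM, hM⟩ := hS.exists_maximal
  ⟨M, hM.isQplex hd (hstem.trans hSM), hSM⟩

lemma IsQplex.le_ip {Q : Set (V d)} (hQ : IsQplex d Q) {p s : V d} (hp : p ∈ Q) (hs : s ∈ Q) :
    1 / ((d:ℝ) * ((d:ℝ) + 1)) ≤ ip p s :=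
  (hQ.2.subset hp).2 s hs

lemma not_countable_isQplex_superset_of_family (hd : 1 < d) {G : Set (V d)} (hG : IsGerm d G)
    (hstem : Set.range (basisDist d) ∪ inBall d ⊆ G) {I : Set ℝ} (hI : ¬ I.Countable)
    (p r : ℝ → V d) (hp : ∀ τ ∈ I, p τ ∈ polar d G) (hr : ∀ τ ∈ I, r τ ∈ polar d G)
    (hpr : ∀ τ ∈ I, ∀ σ ∈ I, 1 / ((d:ℝ) * ((d:ℝ) + 1)) ≤ ip (p τ) (r σ) ↔ σ ≤ τ) :
    ¬ {Q : Set (V d) | IsQplex d Q ∧ G ⊆ Q}.Countable := by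
  have hd0 : d ≠ 0 := by omega
  have hΔ := polar_subset_probSimplex_inter_outBall hd hstem
  have hext : ∀ τ ∈ I, ∃ Q, IsQplex d Q ∧ insert (p τ) (insert (r τ) G) ⊆ Q := by
    intro τ hτ
    have hrG : IsGerm d (insert (r τ) G) := hG.insert hd0 (hΔ (hr τ hτ)) (hr τ hτ).2
    refine (hrG.insert hd0 (hΔ (hp τ hτ)) ?_).exists_isQplex_superset hd
      (hstem.trans ((Set.subset_insert _ _).trans (Set.subset_insert _ _)))
    rintro x (rfl | hx)
    exacts [(hpr τ hτ τ hτ).2 le_rfl, (hp τ hτ).2 x hx]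
  choose! Q hQ hsub using hext
  have hmaps : Set.MapsTo Q I {Q | IsQplex d Q ∧ G ⊆ Q} := fun τ hτ =>
    ⟨hQ τ hτ, (Set.subset_insert _ _).trans ((Set.subset_insert _ _).trans (hsub τ hτ))⟩
  have hmem : ∀ τ ∈ I, p τ ∈ Q τ ∧ r τ ∈ Q τ := fun τ hτ =>
    ⟨hsub τ hτ (Set.mem_insert _ _), hsub τ hτ (Set.mem_insert_of_mem _ (Set.mem_insert _ _))⟩
  have hinj : Set.InjOn Q I := fun τ hτ σ hσ h => le_antisymm
    ((hpr σ hσ τ hτ).1 ((hQ σ hσ).le_ip (hmem σ hσ).1 (h ▸ (hmem τ hτ).2)))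
    ((hpr τ hτ σ hσ).1 ((hQ τ hτ).le_ip (hmem τ hτ).1 (h ▸ (hmem σ hσ).2)))
  exact fun hcount => hI (hmaps.countable_of_injOn hinj hcount)

lemma range_basisDist_union_inBall_subset_cc :
    Set.range (basisDist d) ∪ inBall d ⊆ cc d (basisSimplex d ∪ inBall d) :=
  (Set.union_subset_union_left _ (subset_convexHull ℝ _)).trans
    ((subset_convexHull ℝ _).trans subset_closure)

lemma exists_ip_cpt_eq_zero_separating (hd : d ≠ 0) {G : Set (V d)} (hGH : G ⊆ Hs d)
    (hconv : Convex ℝ G) (hclosed : IsClosed G) (hc : cpt d ∈ G) {q : V d} (hq : q ∈ Hs d)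
    (hqG : q ∉ G) : ∃ A, ip A (cpt d) = 0 ∧ (∀ g ∈ G, ip A g < 1) ∧ 1 < ip A q := by
  obtain ⟨a, haG, haq⟩ := exists_inner_sub_lt_one_lt_inner_sub hconv hclosed hc hqG
  have hproj : ∀ u ∈ Hs d, ip (a - ((d:ℝ) ^ 2 * ⟪a, cpt d⟫_ℝ) • cpt d) u = ⟪a, u - cpt d⟫_ℝ := by
    intro u hu
    have hcu : ⟪cpt d, u⟫_ℝ = 1 / (d:ℝ) ^ 2 := (real_inner_comm _ _).trans hu
    simp only [ip, inner_sub_left, inner_sub_right, real_inner_smul_left, hcu]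
    field_simp
  refine ⟨_, ?_, fun g hg => (hproj g (hGH hg)).trans_lt (haG g hg), haq.trans_eq (hproj q hq).symm⟩
  simpa using hproj _ (inner_cpt_cpt d)

lemma ip_cpt_sub_smul_cpt_add_smul {A q : V d} (hAc : ip A (cpt d) = 0) (hq : q ∈ Hs d)
    (a b : ℝ) : ip (cpt d - a • A) (cpt d + b • (q - cpt d)) = 1 / (d:ℝ) ^ 2 - a * b * ip A q := by
  have hcq : ⟪cpt d, q - cpt d⟫_ℝ = 0 := by
    rw [real_inner_comm]; exact mem_Hs_iff_inner_sub_cpt.1 hq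
  have hAc' : ⟪A, cpt d⟫_ℝ = 0 := hAc
  simp only [ip, inner_sub_left, inner_add_right, real_inner_smul_left, real_inner_smul_right,
    inner_sub_right, inner_cpt_cpt, hcq, hAc']
  ring

lemma cpt_sub_smul_mem_polar (hd : d ≠ 0) {G : Set (V d)} (hGH : G ⊆ Hs d) {A : V d}
    (hAc : ip A (cpt d) = 0) (hAG : ∀ g ∈ G, ip A g < 1) {τ : ℝ} (hτ : 1 ≤ τ) :
    cpt d - (1 / ((d:ℝ) ^ 2 * ((d:ℝ) + 1)) / τ) • A ∈ polar d G := by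
  set γ : ℝ := 1 / ((d:ℝ) ^ 2 * ((d:ℝ) + 1))
  have hAc' : ⟪A, cpt d⟫_ℝ = 0 := hAc
  refine ⟨?_, fun g hg => ?_⟩
  · show ⟪_, cpt d⟫_ℝ = _
    rw [inner_sub_left, real_inner_smul_left, hAc', mul_zero, sub_zero, inner_cpt_cpt]
  · have hcg : ⟪cpt d, g⟫_ℝ = 1 / (d:ℝ) ^ 2 := (real_inner_comm _ _).trans (hGH hg)
    have hAg : γ / τ * ⟪A, g⟫_ℝ ≤ γ / τ :=
      mul_le_of_le_one_right (by positivity) (hAG g hg).le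
    have hγτ : γ / τ ≤ γ := div_le_self (by positivity) hτ
    simp only [ip, inner_sub_left, real_inner_smul_left, hcg]
    rw [one_div_mul_succ_eq hd]
    linarith

end Qplex

/-- a closed convex germ containing the principal stem
cc(Δ_e ∪ B_i) which is not itself a qplex is contained in uncountably many
qplexes. -/
theorem statement7 (d : ℕ) (hd : 2 ≤ d) (G : Set (V d)) (hG : IsGerm d G)
    (hclosed : IsClosed G) (hconv : Convex ℝ G)
    (hstem : cc d (basisSimplex d ∪ inBall d) ⊆ G)
    (hnot : ¬ IsQplex d G) :
    ¬ {Q : Set (V d) | IsQplex d Q ∧ G ⊆ Q}.Countable := by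
  have hd0 : d ≠ 0 := by omega
  have hS := range_basisDist_union_inBall_subset_cc.trans hstem
  have hGH : G ⊆ Hs d := fun g hg => (hG.1 hg).1
  obtain ⟨q, hq, hqG⟩ := Set.not_subset.1 (mt hG.isQplex_of_polar_subset hnot)
  have hc : cpt d ∈ G := hS (Or.inr (cpt_mem_inBall hd))
  obtain ⟨A, hAc, hAG, hAq⟩ :=
    exists_ip_cpt_eq_zero_separating hd0 hGH hconv hclosed hc hq.1 hqG
  set γ : ℝ := 1 / ((d:ℝ) ^ 2 * ((d:ℝ) + 1))
  refine not_countable_isQplex_superset_of_family hd hG hS (I := Set.Ioc 1 (ip A q))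
    (by simpa using hAq) (fun τ => cpt d - (γ / τ) • A)
    (fun τ => cpt d + (τ / ip A q) • (q - cpt d))
    (fun τ hτ => cpt_sub_smul_mem_polar hd0 hGH hAc hAG hτ.1.le)
    (fun τ hτ => (convex_polar G).add_smul_sub_mem (cpt_mem_polar hd0 hGH) hq
      ⟨div_nonneg (by linarith [hτ.1]) (by linarith), (div_le_one (by linarith)).2 hτ.2⟩) ?_
  rintro τ ⟨hτ, -⟩ σ -
  rw [ip_cpt_sub_smul_cpt_add_smul hAc hq.1, one_div_mul_succ_eq hd0, sub_le_sub_iff_left,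
    show γ / τ * (σ / ip A q) * ip A q = γ * (σ / τ) by field_simp]
  exact (mul_le_iff_le_one_right (by positivity)).trans (div_le_one (by linarith))
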